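/- arXiv:1406.5312 — 3 statements merged into one kernel-verified Lean document; each statement's English description precedes it below -/
import Mathlib

section
/- Suppose a Markov kernel P on ℝ satisfies the drift condition log(e^{-V} P e^{V})(x) ≤ -δ W(x) + b·1_C(x) for functions V = W ≥ 1 and a set C ⊂ ℝ. Define on ℝ² the kernel Q((x,y), ·) = δ_y ⊗ P(y, ·) (the pair-chain kernel), V₂(x,y) = V(y) + (δ/2) W(x), W₂(x,y) = (W(x) + W(y))/2 and C₂ = ℝ × C. Then log(e^{-V₂} Q e^{V₂})(x,y) ≤ -δ W₂(x,y) + b·1_{C₂}(x,y) for all (x,y) ∈ ℝ². -/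
open MeasureTheory ProbabilityTheory

/-! The pair-chain integral factors as `(P e^V)(y) · e^{(δ/2) V(y)}`, so its logarithm is
`log (P e^V)(y) + (δ/2) V(y)` and the drift bound for `P` at `y` gives the claim, the
indicator of `ℝ × C` at `(x, y)` being that of `C` at `y`. The only care needed is the junk
value `log 0 = 0`, which makes the logarithm of the product merely *at most* the sum. -/

theorem Real.log_mul_exp_le (a : ℝ) {c : ℝ} (hc : 0 ≤ c) :
    Real.log (a * Real.exp c) ≤ Real.log a + c := by
  rcases eq_or_ne a 0 with rfl | ha
  · simpa using hc
  · rw [Real.log_mul ha (Real.exp_ne_zero c), Real.log_exp]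

theorem MeasureTheory.integral_exp_add_const {α : Type*} [MeasurableSpace α] (μ : Measure α)
    (f : α → ℝ) (c : ℝ) :
    ∫ z, Real.exp (f z + c) ∂μ = (∫ z, Real.exp (f z) ∂μ) * Real.exp c := by
  simp_rw [Real.exp_add]
  exact integral_mul_const _ _

theorem Set.indicator_univ_prod_one {α β : Type*} (C : Set β) (x : α) (y : β) :
    (Set.univ ×ˢ C).indicator (fun _ => (1 : ℝ)) (x, y) = C.indicator (fun _ => 1) y := by
  by_cases hy : y ∈ C <;> simp [hy]

/-- As `∫ e^{V₂} dQ((x,y),·) = ∫ e^{V(z) + (δ/2) V(y)} P(y,dz)`, the pair-chain kernel `Q`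
enters only through this integral over `P y`. -/
theorem stmt_6_general (P : ProbabilityTheory.Kernel ℝ ℝ)
    (V : ℝ → ℝ) (hV : ∀ x, 1 ≤ V x) (δ b : ℝ) (hδ : 0 < δ)
    (C : Set ℝ)
    (hdrift : ∀ x : ℝ,
      Real.log (∫ z, Real.exp (V z) ∂(P x)) - V x ≤
        -δ * V x + b * C.indicator (fun _ => (1 : ℝ)) x) :
    ∀ x y : ℝ,
      Real.log (∫ z, Real.exp (V z + (δ / 2) * V y) ∂(P y)) -
          (V y + (δ / 2) * V x) ≤
        -δ * ((V x + V y) / 2) +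
          b * Set.indicator (Set.univ ×ˢ C) (fun _ => (1 : ℝ)) (x, y) := by
  intro x y
  have hlog := Real.log_mul_exp_le (∫ z, Real.exp (V z) ∂(P y))
    (by have := hV y; positivity : 0 ≤ δ / 2 * V y)
  rw [integral_exp_add_const, Set.indicator_univ_prod_one]
  linarith [hdrift y]

/-- Transfer of the drift condition from a kernel `P` on `ℝ` to the pair-chain
kernel `Q((x,y),·) = δ_y ⊗ P(y,·)` on `ℝ²`, with `V₂(x,y) = V(y) + (δ/2) W(x)`,
`W₂(x,y) = (W(x)+W(y))/2`, `C₂ = ℝ × C` and `V = W`. Since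
`∫ e^{V₂} dQ((x,y),·) = ∫ e^{V(z) + (δ/2) V(y)} P(y,dz)`, the conclusion is stated
with this integral. -/
theorem stmt_6 (P : ProbabilityTheory.Kernel ℝ ℝ) [IsMarkovKernel P]
    (V : ℝ → ℝ) (hV : ∀ x, 1 ≤ V x) (δ b : ℝ) (hδ : 0 < δ) (hb : 0 < b)
    (C : Set ℝ)
    (hdrift : ∀ x : ℝ,
      Real.log (∫ z, Real.exp (V z) ∂(P x)) - V x ≤
        -δ * V x + b * C.indicator (fun _ => (1 : ℝ)) x) :
    ∀ x y : ℝ,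
      Real.log (∫ z, Real.exp (V z + (δ / 2) * V y) ∂(P y)) -
          (V y + (δ / 2) * V x) ≤
        -δ * ((V x + V y) / 2) +
          b * Set.indicator (Set.univ ×ˢ C) (fun _ => (1 : ℝ)) (x, y) :=
  stmt_6_general P V hV δ b hδ C hdrift
end

section
/- Suppose the averages (1/t) log(V_t/V₀) of a wealth process satisfy a large deviations upper bound with good rate function Λ* that is strictly convex, vanishes only at m > 0, and is decreasing on (-∞, m]. Then P(V_t ≥ V₀ e^{mt/2}) ≥ 1 - e^{-t Λ*(m/2)/2} for all sufficiently large t, so the strategy is an asymptotic exponential arbitrage with geometrically decaying probability of failure. -/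
/-!
Failure of the bound `V_t ≥ V₀ e^{mt/2}` means that the average `(1/t) log (V_t/V₀)` lies in
the closed half-line `(-∞, m/2]`. Since the rate function decreases up to `m`, its infimum over
that half-line is `I(m/2) > I(m) = 0`, so the LDP upper bound makes the probability of failure
eventually smaller than `e^{-t I(m/2)/2}`.
-/

open MeasureTheory Filter Real Set

lemma one_sub_toReal_measure_compl_le {Ω : Type*} [MeasurableSpace Ω] (P : Measure Ω)
    [IsProbabilityMeasure P] (s : Set Ω) : 1 - (P sᶜ).toReal ≤ (P s).toReal := by
  have h : (1 : ℝ) ≤ (P s + P sᶜ).toReal := by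
    simpa [measure_univ] using
      ENNReal.toReal_mono (by finiteness) (measure_univ_le_add_compl (μ := P) s)
  rw [ENNReal.toReal_add (measure_ne_top P s) (measure_ne_top P sᶜ)] at h
  linarith

lemma isLeast_image_Iic_of_antitoneOn {I : ℝ → ℝ} {a m : ℝ} (hI : AntitoneOn I (Iic m))
    (ham : a ≤ m) : IsLeast (I '' Iic a) (I a) := by
  refine ⟨mem_image_of_mem I self_mem_Iic, ?_⟩
  rintro _ ⟨x, hxa, rfl⟩
  exact hI (mem_Iic.2 (le_trans hxa ham)) (mem_Iic.2 ham) hxa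

lemma inv_mul_log_div_lt_iff {t v v₀ a : ℝ} (ht : 0 < t) (hv : 0 < v) (hv₀ : 0 < v₀) :
    t⁻¹ * log (v / v₀) < a ↔ v < v₀ * exp (a * t) := by
  rw [inv_mul_lt_iff₀ ht, log_lt_iff_lt_exp (div_pos hv hv₀), div_lt_iff₀' hv₀, mul_comm t]

lemma le_exp_of_inv_mul_log_lt {t p c : ℝ} (ht : 0 < t) (hp : 0 ≤ p)
    (h : t⁻¹ * log p < -c) : p ≤ exp (-c * t) := by
  rcases hp.eq_or_lt with rfl | hp
  · positivity
  rw [inv_mul_lt_iff₀ ht, log_lt_iff_lt_exp hp, mul_comm] at h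
  exact h.le

lemma eventually_le_exp_of_limsup_lt {p : ℕ → ℝ} {c : ℝ} (hp₀ : ∀ t, 0 ≤ p t)
    (hp₁ : ∀ t, p t ≤ 1) (h : limsup (fun t : ℕ ↦ (t : ℝ)⁻¹ * log (p t)) atTop < -c) :
    ∀ᶠ t : ℕ in atTop, p t ≤ exp (-c * t) := by
  have hbdd : IsBoundedUnder (· ≤ ·) atTop (fun t : ℕ ↦ (t : ℝ)⁻¹ * log (p t)) :=
    isBoundedUnder_of ⟨0, fun t ↦
      mul_nonpos_of_nonneg_of_nonpos (by positivity) (log_nonpos (hp₀ t) (hp₁ t))⟩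
  filter_upwards [eventually_lt_of_limsup_lt h hbdd, eventually_gt_atTop 0] with t ht ht₀
  exact le_exp_of_inv_mul_log_lt (Nat.cast_pos.2 ht₀) (hp₀ t) ht

theorem stmt_14_general {Ω : Type*} [MeasurableSpace Ω] (P : Measure Ω) [IsProbabilityMeasure P]
    (V : ℕ → Ω → ℝ) (hVpos : ∀ t ω, 0 < V t ω)
    (V0 : ℝ) (hV0 : 0 < V0)
    (I : ℝ → ℝ) (m : ℝ) (hm : 0 < m)
    (hzero : ∀ x, I x = 0 ↔ x = m)
    (hanti : StrictAntiOn I (Set.Iic m))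
    (hLDP : ∀ F : Set ℝ, IsClosed F →
      Filter.limsup
        (fun t : ℕ => ((t : ℝ))⁻¹ *
          Real.log ((P {ω | ((t : ℝ))⁻¹ * Real.log (V t ω / V0) ∈ F}).toReal))
        Filter.atTop ≤ -sInf (I '' F)) :
    (∃ t0 : ℕ, ∀ t ≥ t0,
      1 - Real.exp (-(t : ℝ) * I (m / 2) / 2) ≤
        (P {ω | V0 * Real.exp (m * t / 2) ≤ V t ω}).toReal) ∧
    0 < I (m / 2) := by
  have hpos : 0 < I (m / 2) :=
    (hzero m).2 rfl ▸ hanti (mem_Iic.2 (by linarith)) self_mem_Iic (by linarith)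
  refine ⟨?_, hpos⟩
  have hinf : sInf (I '' Iic (m / 2)) = I (m / 2) :=
    (isLeast_image_Iic_of_antitoneOn hanti.antitoneOn (by linarith)).csInf_eq
  have hlimsup := (hLDP _ isClosed_Iic).trans_lt
    (show -sInf (I '' Iic (m / 2)) < -(I (m / 2) / 2) by rw [hinf]; linarith)
  obtain ⟨t0, ht0⟩ := eventually_atTop.1
    ((eventually_le_exp_of_limsup_lt (fun _ ↦ ENNReal.toReal_nonneg)
      (fun _ ↦ measureReal_le_one) hlimsup).and (eventually_gt_atTop 0))
  refine ⟨t0, fun t ht ↦ ?_⟩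
  obtain ⟨hfail, ht⟩ := ht0 t ht
  have hsub : {ω | V0 * exp (m * t / 2) ≤ V t ω}ᶜ ⊆
      {ω | (t : ℝ)⁻¹ * log (V t ω / V0) ∈ Iic (m / 2)} := fun ω hω ↦ by
    refine ((inv_mul_log_div_lt_iff (Nat.cast_pos.2 ht) (hVpos t ω) hV0).2 ?_).le
    simpa [div_mul_eq_mul_div] using hω
  calc 1 - exp (-(t : ℝ) * I (m / 2) / 2)
      ≤ 1 - (P {ω | (t : ℝ)⁻¹ * log (V t ω / V0) ∈ Iic (m / 2)}).toReal := by
        rw [show -(t : ℝ) * I (m / 2) / 2 = -(I (m / 2) / 2) * t by ring]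
        linarith [hfail]
    _ ≤ 1 - (P {ω | V0 * exp (m * t / 2) ≤ V t ω}ᶜ).toReal :=
        sub_le_sub_left (ENNReal.toReal_mono (measure_ne_top P _) (measure_mono hsub)) 1
    _ ≤ _ := one_sub_toReal_measure_compl_le P _

/-- If the averages `(1/t) log(V_t/V₀)` satisfy a large deviations upper bound with a
nonnegative rate function `I` which is strictly convex, vanishes only at `m > 0` and is
strictly decreasing on `(-∞, m]`, then
`P(V_t ≥ V₀ e^{mt/2}) ≥ 1 - e^{-t I(m/2)/2}` for all large `t`; in particular the
strategy is an asymptotic exponential arbitrage with geometrically decaying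
probability of failure. -/
theorem stmt_14 {Ω : Type*} [MeasurableSpace Ω] (P : Measure Ω) [IsProbabilityMeasure P]
    (V : ℕ → Ω → ℝ) (hVmeas : ∀ t, Measurable (V t)) (hVpos : ∀ t ω, 0 < V t ω)
    (V0 : ℝ) (hV0 : 0 < V0)
    (I : ℝ → ℝ) (hInn : ∀ x, 0 ≤ I x) (m : ℝ) (hm : 0 < m)
    (hzero : ∀ x, I x = 0 ↔ x = m)
    (hconv : StrictConvexOn ℝ Set.univ I)
    (hanti : StrictAntiOn I (Set.Iic m))
    (hLDP : ∀ F : Set ℝ, IsClosed F →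
      Filter.limsup
        (fun t : ℕ => ((t : ℝ))⁻¹ *
          Real.log ((P {ω | ((t : ℝ))⁻¹ * Real.log (V t ω / V0) ∈ F}).toReal))
        Filter.atTop ≤ -sInf (I '' F)) :
    (∃ t0 : ℕ, ∀ t ≥ t0,
      1 - Real.exp (-(t : ℝ) * I (m / 2) / 2) ≤
        (P {ω | V0 * Real.exp (m * t / 2) ≤ V t ω}).toReal) ∧
    0 < I (m / 2) :=
  stmt_14_general P V hVpos V0 hV0 I m hm hzero hanti hLDP
end

section
/- Let α < 0 and U(x) = -x^α. Suppose a positive wealth process (V_t) satisfies |E[U(V_t)]| ≤ K e^{-ct} for all large t, for some constants c, K > 0. Then for any b > 0 with c + αb > 0, P(V_t < e^{bt}) ≤ K e^{-(c+αb)t} for all large t; in particular the strategy provides asymptotic exponential arbitrage with geometrically decaying failure probability. -/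
/-!
For `α < 0` the map `x ↦ x ^ α` is decreasing on `(0, ∞)`, so `V_t < e^{bt}` forces
`V_t ^ α > e^{αbt}`, and Markov's inequality applied to `V_t ^ α` gives
`P(V_t < e^{bt}) ≤ E[V_t ^ α] e^{-αbt} ≤ K e^{-(c+αb)t}`.
Taking `b = -c/(2α)` makes this `K e^{-ct/2}`, which is eventually below `e^{-ct/4}`.
-/

open MeasureTheory Filter Real

section NegativePowerMarkov

variable {Ω : Type*} [MeasurableSpace Ω] {μ : Measure Ω} {X : Ω → ℝ} {α : ℝ}

theorem mul_measure_lt_le_lintegral_rpow_of_nonpos (hX : AEMeasurable X μ)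
    (hpos : ∀ ω, 0 < X ω) (hα : α ≤ 0) (s : ℝ) :
    ENNReal.ofReal (s ^ α) * μ {ω | X ω < s} ≤
      ∫⁻ ω, ENNReal.ofReal (X ω ^ α) ∂μ := by
  have hsub : {ω | X ω < s} ⊆ {ω | ENNReal.ofReal (s ^ α) ≤ ENNReal.ofReal (X ω ^ α)} :=
    fun ω hω => ENNReal.ofReal_le_ofReal (rpow_le_rpow_of_nonpos (hpos ω) hω.le hα)
  exact (mul_le_mul_right (measure_mono hsub) _).trans
    (mul_meas_ge_le_lintegral₀ (hX.pow_const α).ennreal_ofReal _)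

theorem measureReal_lt_le_of_lintegral_rpow_le (hX : AEMeasurable X μ)
    (hpos : ∀ ω, 0 < X ω) (hα : α ≤ 0) {s B : ℝ} (hs : 0 < s) (hB : 0 ≤ B)
    (hint : ∫⁻ ω, ENNReal.ofReal (X ω ^ α) ∂μ ≤ ENNReal.ofReal B) :
    μ.real {ω | X ω < s} ≤ B * s ^ (-α) := by
  have hmarkov := (mul_measure_lt_le_lintegral_rpow_of_nonpos hX hpos hα s).trans hint
  have hreal : s ^ α * μ.real {ω | X ω < s} ≤ B := by
    have := ENNReal.toReal_mono ENNReal.ofReal_ne_top hmarkov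
    rwa [ENNReal.toReal_mul, ENNReal.toReal_ofReal (rpow_nonneg hs.le α),
      ENNReal.toReal_ofReal hB] at this
  rwa [rpow_neg hs.le, ← div_eq_mul_inv, le_div_iff₀ (rpow_pos_of_pos hs α), mul_comm]

end NegativePowerMarkov

theorem eventually_mul_exp_neg_le_exp_neg (K : ℝ) {c c' : ℝ} (h : c' < c) :
    ∀ᶠ t : ℕ in atTop, K * exp (-c * t) ≤ exp (-c' * t) := by
  have hdecay : Tendsto (fun t : ℕ => K * exp (-(c - c') * t)) atTop (nhds 0) := by
    have hexp := tendsto_natCast_atTop_atTop.const_mul_atTop_of_neg (by linarith : -(c - c') < 0)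
    simpa using (tendsto_exp_atBot.comp hexp).const_mul K
  filter_upwards [(tendsto_order.1 hdecay).2 1 one_pos] with t ht
  calc K * exp (-c * t) = K * exp (-(c - c') * t) * exp (-c' * t) := by
        rw [mul_assoc, ← exp_add]; ring_nf
    _ ≤ exp (-c' * t) := mul_le_of_le_one_left (exp_pos _).le ht.le

/-- If for the power utility `U(x) = -x^α` with `α < 0` the expected utility satisfies
`|E U(V_t)| = E V_t^α ≤ K e^{-ct}` for all large `t`, then for every `b > 0` with
`c + αb > 0` we have `P(V_t < e^{bt}) ≤ K e^{-(c+αb)t}` for all large `t`; in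
particular the strategy provides asymptotic exponential arbitrage with geometrically
decaying probability of failure. -/
theorem stmt_16 {Ω : Type*} [MeasurableSpace Ω] (P : Measure Ω) [IsProbabilityMeasure P]
    (V : ℕ → Ω → ℝ) (hVmeas : ∀ t, Measurable (V t)) (hVpos : ∀ t ω, 0 < V t ω)
    (α : ℝ) (hα : α < 0) (c K : ℝ) (hc : 0 < c) (hK : 0 < K)
    (hU : ∃ T : ℕ, ∀ t ≥ T,
      ∫⁻ ω, ENNReal.ofReal ((V t ω) ^ α) ∂P ≤ ENNReal.ofReal (K * Real.exp (-c * t))) :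
    (∀ b : ℝ, 0 < b → 0 < c + α * b → ∃ t0 : ℕ, ∀ t ≥ t0,
      (P {ω | V t ω < Real.exp (b * t)}).toReal ≤ K * Real.exp (-(c + α * b) * t)) ∧
    (∃ b > 0, ∃ c' > 0, ∃ t1 : ℕ, ∀ t ≥ t1,
      1 - Real.exp (-c' * t) ≤ (P {ω | Real.exp (b * t) ≤ V t ω}).toReal) := by
  obtain ⟨T, hT⟩ := hU
  have tail (b : ℝ) (t : ℕ) (ht : T ≤ t) :
      P.real {ω | V t ω < exp (b * t)} ≤ K * exp (-(c + α * b) * t) := by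
    calc P.real {ω | V t ω < exp (b * t)} ≤ K * exp (-c * t) * exp (b * t) ^ (-α) :=
          measureReal_lt_le_of_lintegral_rpow_le (hVmeas t).aemeasurable (hVpos t) hα.le
            (exp_pos _) (by positivity) (hT t ht)
      _ = K * exp (-(c + α * b) * t) := by
          rw [← exp_mul, mul_assoc, ← exp_add]; ring_nf
  obtain ⟨b, hb, hαb⟩ : ∃ b > 0, c + α * b = c / 2 :=
    ⟨-(c / (2 * α)), neg_pos.2 (div_neg_of_pos_of_neg hc (by linarith)),
      by field_simp [hα.ne]; ring⟩
  refine ⟨fun b' _ _ => ⟨T, tail b'⟩, b, hb, c / 4, by positivity, ?_⟩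
  obtain ⟨t1, ht1⟩ := eventually_atTop.1 ((eventually_ge_atTop T).and
    (eventually_mul_exp_neg_le_exp_neg K (c := c / 2) (c' := c / 4) (by linarith)))
  refine ⟨t1, fun t ht => ?_⟩
  obtain ⟨hTt, hdecay⟩ := ht1 t ht
  have hcompl : {ω | exp (b * t) ≤ V t ω} = {ω | V t ω < exp (b * t)}ᶜ := by
    ext ω; simp [not_lt]
  rw [← measureReal_def, hcompl,
    probReal_compl_eq_one_sub (measurableSet_lt (hVmeas t) measurable_const)]
  have hfail := tail b t hTt
  rw [hαb] at hfail
  linarith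
end
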